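/- arXiv:0806.3060 — 2 statements merged into one kernel-verified Lean document; each statement's English description precedes it below -/
import Mathlib

section
/- Let a : ℕ → ℝ (indexed from 1) be a sequence such that there exists K with |n · a_n| ≤ K for all n ≥ 1. If for some k ≥ 1 the k-th order Cesàro means S^{(k)}_n / n^k converge as n → ∞, then the series ∑ a_n converges (i.e. the partial sums S^{(0)}_n converge). -/
/-!
The `k`-th forward difference with step `h` of `S^{(k)}` at `n` is an `h^k`-fold sum of values
of `S` on the window `[n, n + k h]`, on which `S` varies by at most `K k h / n` because
`|a i| ≤ K / n` there. Writing `S^{(k)}_m = L m^k + o(m^k)`, the same difference is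
`k! L h^k + o(n^k)`: the `k`-th difference of `m^k` is `k! h^k`, and that of the error term is at
most `2^k` times its maximum on the window. With `h ≈ δ n` this gives
`|S_n - k! L| ≤ K k δ + o(1)` for every `δ > 0`.
-/

open Filter Topology

/-- Iterated Cesàro sums of a sequence `b` (indexed from 1):
`cesSum b 0 n = b n` and `cesSum b (k+1) n = ∑_{i=1}^n cesSum b k i`. -/
noncomputable def cesSum (b : ℕ → ℝ) : ℕ → ℕ → ℝ
  | 0, n => b n
  | k+1, n => ∑ i ∈ Finset.Icc 1 n, cesSum b k i

open Finset fwdDiff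

theorem sum_Icc_one_add {M : Type*} [AddCommMonoid M] (f : ℕ → M) (n h : ℕ) :
    ∑ i ∈ Icc 1 (n + h), f i = ∑ i ∈ Icc 1 n, f i + ∑ i ∈ range h, f (n + i + 1) := by
  induction h with
  | zero => simp
  | succ h ih => rw [← add_assoc, sum_Icc_succ_top (by omega), ih, sum_range_succ, add_assoc]

theorem fwdDiff_cesSum_succ (b : ℕ → ℝ) (j h : ℕ) :
    Δ_[h] (cesSum b (j + 1)) = ∑ i ∈ range h, fun n => cesSum b j (n + (i + 1)) := by
  ext n
  simp [fwdDiff, cesSum, sum_Icc_one_add, add_assoc]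

theorem fwdDiff_iter_cesSum_mem_Icc (b : ℕ → ℝ) {c C : ℝ} (h j n : ℕ)
    (hb : ∀ m ∈ Set.Icc n (n + j * h), b m ∈ Set.Icc c C) :
    (Δ_[h])^[j] (cesSum b j) n ∈ Set.Icc (c * h ^ j) (C * h ^ j) := by
  induction j generalizing n with
  | zero => simpa [cesSum] using hb n (by simp)
  | succ j ih =>
    have hterm : ∀ i ∈ range h,
        (Δ_[h])^[j] (cesSum b j) (n + (i + 1)) ∈ Set.Icc (c * h ^ j) (C * h ^ j) := by
      intro i hi
      refine ih _ fun m hm => hb m ⟨by grind, ?_⟩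
      have := mem_range.1 hi
      have := hm.2
      nlinarith
    rw [Function.iterate_succ_apply, fwdDiff_cesSum_succ, fwdDiff_iter_finsetSum, Finset.sum_apply]
    simp_rw [fwdDiff_iter_comp_add]
    constructor
    · calc c * (h : ℝ) ^ (j + 1) = ∑ _i ∈ range h, c * (h : ℝ) ^ j := by simp; ring
        _ ≤ _ := sum_le_sum fun i hi => (hterm i hi).1
    · calc _ ≤ ∑ _i ∈ range h, C * (h : ℝ) ^ j := sum_le_sum fun i hi => (hterm i hi).2
        _ = C * (h : ℝ) ^ (j + 1) := by simp; ring

theorem norm_fwdDiff_iter_le {E : Type*} [SeminormedAddCommGroup E] (f : ℕ → E) {B : ℝ}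
    (h j n : ℕ) (hf : ∀ m ∈ Set.Icc n (n + j * h), ‖f m‖ ≤ B) :
    ‖(Δ_[h])^[j] f n‖ ≤ 2 ^ j * B := by
  induction j generalizing n with
  | zero => simpa using hf n (by simp)
  | succ j ih =>
    have hshift := ih (n + h) fun m hm => hf m ⟨by grind, by grind⟩
    have hbase := ih n fun m hm => hf m ⟨hm.1, by grind⟩
    calc ‖(Δ_[h])^[j + 1] f n‖ = ‖(Δ_[h])^[j] f (n + h) - (Δ_[h])^[j] f n‖ := by
          rw [Function.iterate_succ_apply']; rfl
      _ ≤ ‖(Δ_[h])^[j] f (n + h)‖ + ‖(Δ_[h])^[j] f n‖ := norm_sub_le _ _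
      _ ≤ 2 ^ (j + 1) * B := by rw [pow_succ]; linarith

theorem fwdDiff_iter_natCast_pow (h k n : ℕ) :
    (Δ_[h])^[k] (fun m : ℕ => (m : ℝ) ^ k) n = k.factorial * (h : ℝ) ^ k := by
  rcases Nat.eq_zero_or_pos h with rfl | hh
  · rcases k with _ | k
    · simp
    · have : Δ_[0] (fun m : ℕ => (m : ℝ) ^ (k + 1)) = 0 := by ext; simp [fwdDiff]
      rw [Function.iterate_succ_apply, this]
      simp [fwdDiff_iter_eq_sum_shift]
  have hunit := congrFun (fwdDiff_iter_eq_factorial (R := ℝ) (n := k)) ((n : ℝ) / h)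
  rw [fwdDiff_iter_eq_sum_shift] at hunit ⊢
  have hh0 : (h : ℝ) ≠ 0 := by positivity
  rw [Pi.natCast_apply] at hunit
  rw [← hunit, mul_comm, mul_sum]
  refine sum_congr rfl fun i _ => ?_
  simp only [zsmul_eq_mul, nsmul_eq_mul, smul_eq_mul, Nat.cast_add, Nat.cast_mul, mul_one]
  rw [show (n : ℝ) + i * h = h * (n / h + i) by field_simp, mul_pow]
  ring

theorem abs_sum_Icc_one_add_sub_le (a : ℕ → ℝ) {K : ℝ}
    (hK : ∀ n : ℕ, 1 ≤ n → |(n : ℝ) * a n| ≤ K) {n : ℕ} (hn : 1 ≤ n) (d : ℕ) :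
    |∑ i ∈ Icc 1 (n + d), a i - ∑ i ∈ Icc 1 n, a i| ≤ K * d / n := by
  have hn' : (0 : ℝ) < n := by exact_mod_cast hn
  have hterm : ∀ i ∈ range d, |a (n + i + 1)| ≤ K / n := by
    intro i _
    have hpos : (0 : ℝ) < ((n + i + 1 : ℕ) : ℝ) := by positivity
    have hle : (n : ℝ) ≤ ((n + i + 1 : ℕ) : ℝ) := by exact_mod_cast (by omega : n ≤ n + i + 1)
    have := hK (n + i + 1) (by omega)
    rw [abs_mul, abs_of_pos hpos] at this
    rw [le_div_iff₀ hn']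
    nlinarith [abs_nonneg (a (n + i + 1))]
  rw [sum_Icc_one_add, add_sub_cancel_left]
  calc |∑ i ∈ range d, a (n + i + 1)| ≤ ∑ i ∈ range d, |a (n + i + 1)| := abs_sum_le_sum_abs _ _
    _ ≤ ∑ _i ∈ range d, K / n := sum_le_sum hterm
    _ = K * d / n := by simp; ring

theorem isLittleO_sub_mul_pow_of_tendsto_div_pow {u : ℕ → ℝ} {k : ℕ} {L : ℝ}
    (hu : Tendsto (fun n => u n / (n : ℝ) ^ k) atTop (𝓝 L)) :
    (fun n => u n - L * (n : ℝ) ^ k) =o[atTop] fun n => (n : ℝ) ^ k := by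
  have hpos : ∀ᶠ n : ℕ in atTop, (n : ℝ) ^ k ≠ 0 := by
    filter_upwards [eventually_ge_atTop 1] with n hn
    positivity
  rw [Asymptotics.isLittleO_iff_tendsto' (hpos.mono fun n hn h0 => absurd h0 hn)]
  rw [← sub_self L]
  refine (hu.sub_const L).congr' ?_
  filter_upwards [hpos] with n hn
  field_simp

section Hardy

variable (a : ℕ → ℝ) {K : ℝ} (k : ℕ) (L : ℝ)

theorem abs_sum_Icc_sub_le_of_window (hK : ∀ n : ℕ, 1 ≤ n → |(n : ℝ) * a n| ≤ K) {n h : ℕ}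
    (hn : 1 ≤ n) (hh : 0 < h) {B : ℝ}
    (hB : ∀ m ∈ Set.Icc n (n + k * h),
      ‖cesSum (fun m => ∑ i ∈ Icc 1 m, a i) k m - L * (m : ℝ) ^ k‖ ≤ B) :
    |∑ i ∈ Icc 1 n, a i - k.factorial * L| ≤ K * k * h / n + 2 ^ k * B / (h : ℝ) ^ k := by
  set S : ℕ → ℝ := fun m => ∑ i ∈ Icc 1 m, a i
  set W : ℝ := K * k * h / n
  have hK0 : 0 ≤ K := (abs_nonneg _).trans (hK 1 le_rfl)
  have hwindow : ∀ m ∈ Set.Icc n (n + k * h), S m ∈ Set.Icc (S n - W) (S n + W) := by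
    rintro m ⟨hnm, hmk⟩
    obtain ⟨d, rfl⟩ := Nat.exists_eq_add_of_le hnm
    have hd : K * d / n ≤ W := by
      have : (d : ℝ) ≤ k * h := by exact_mod_cast (by omega : d ≤ k * h)
      rw [show W = K * (k * h) / n by ring]
      gcongr
    have := (abs_sum_Icc_one_add_sub_le a hK hn d).trans hd
    constructor <;> linarith [abs_le.1 this]
  have hsum := fwdDiff_iter_cesSum_mem_Icc S h k n hwindow
  have hlin : (Δ_[h])^[k] (fun m => cesSum S k m - L * (m : ℝ) ^ k) n
      = (Δ_[h])^[k] (cesSum S k) n - L * (k.factorial * (h : ℝ) ^ k) := by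
    have : (fun m => cesSum S k m - L * (m : ℝ) ^ k)
        = cesSum S k + (-L) • fun m : ℕ => (m : ℝ) ^ k := by
      ext m; simp [sub_eq_add_neg]
    rw [this, fwdDiff_iter_add, fwdDiff_iter_const_smul]
    simp [fwdDiff_iter_natCast_pow, sub_eq_add_neg]
  have hdiff := norm_fwdDiff_iter_le _ h k n hB
  rw [Real.norm_eq_abs, hlin] at hdiff
  have hhk : (0 : ℝ) < (h : ℝ) ^ k := by positivity
  set D := (Δ_[h])^[k] (cesSum S k) n
  have hsplit : (S n - k.factorial * L) * (h : ℝ) ^ k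
      = (S n * (h : ℝ) ^ k - D) + (D - L * (k.factorial * (h : ℝ) ^ k)) := by ring
  have hscaled : |S n - k.factorial * L| * (h : ℝ) ^ k ≤ W * (h : ℝ) ^ k + 2 ^ k * B := by
    calc |S n - k.factorial * L| * (h : ℝ) ^ k
        = |(S n * (h : ℝ) ^ k - D) + (D - L * (k.factorial * (h : ℝ) ^ k))| := by
          rw [← hsplit, abs_mul, abs_of_pos hhk]
      _ ≤ |S n * (h : ℝ) ^ k - D| + |D - L * (k.factorial * (h : ℝ) ^ k)| := abs_add_le _ _
      _ ≤ W * (h : ℝ) ^ k + 2 ^ k * B :=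
          add_le_add (abs_le.2 ⟨by linarith [hsum.2], by linarith [hsum.1]⟩) hdiff
  calc |S n - k.factorial * L| ≤ (W * (h : ℝ) ^ k + 2 ^ k * B) / (h : ℝ) ^ k :=
        (le_div_iff₀ hhk).2 hscaled
    _ = W + 2 ^ k * B / (h : ℝ) ^ k := by field_simp

theorem eventually_abs_sum_Icc_sub_le (hK : ∀ n : ℕ, 1 ≤ n → |(n : ℝ) * a n| ≤ K)
    (hF : (fun m => cesSum (fun m => ∑ i ∈ Icc 1 m, a i) k m - L * (m : ℝ) ^ k)
      =o[atTop] fun m => (m : ℝ) ^ k)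
    {δ ε : ℝ} (hδ : 0 < δ) (hε : 0 < ε) :
    ∀ᶠ n : ℕ in atTop, |∑ i ∈ Icc 1 n, a i - k.factorial * L| ≤ K * k * δ + ε := by
  set C : ℝ := 2 ^ k * (δ⁻¹ + k) ^ k
  have hC : 0 < C := by positivity
  obtain ⟨N, hN⟩ := eventually_atTop.1 (hF.bound (by positivity : 0 < ε / (2 * C)))
  have hsmall := (tendsto_order.1 (tendsto_const_div_atTop_nhds_zero_nat (K * k))).2 _
    (half_pos hε)
  filter_upwards [eventually_ge_atTop (max N 1), hsmall] with n hn hKn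
  have hn1 : 1 ≤ n := le_of_max_le_right hn
  set h := ⌈δ * n⌉₊
  have hh : 0 < h := Nat.ceil_pos.2 (by positivity)
  have hh0 : (0 : ℝ) < h := by exact_mod_cast hh
  have hh_ge : δ * n ≤ h := Nat.le_ceil _
  have hh_lt : (h : ℝ) < δ * n + 1 := Nat.ceil_lt_add_one (by positivity)
  have hB : ∀ m ∈ Set.Icc n (n + k * h),
      ‖cesSum (fun m => ∑ i ∈ Icc 1 m, a i) k m - L * (m : ℝ) ^ k‖
        ≤ ε / (2 * C) * ((n : ℝ) + k * h) ^ k := by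
    rintro m ⟨hnm, hmk⟩
    refine (hN m ((le_of_max_le_left hn).trans hnm)).trans ?_
    rw [Real.norm_eq_abs, abs_of_nonneg (by positivity)]
    gcongr
    exact_mod_cast hmk
  have hK0 : 0 ≤ K := (abs_nonneg _).trans (hK 1 le_rfl)
  have hfirst : K * k * h / n ≤ K * k * δ + ε / 2 := by
    calc K * k * h / n ≤ K * k * (δ * n + 1) / n := by gcongr
      _ = K * k * δ + K * k / n := by field_simp
      _ ≤ K * k * δ + ε / 2 := by linarith
  have hratio : ((n : ℝ) + k * h) / h ≤ δ⁻¹ + k := by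
    have : (n : ℝ) ≤ δ⁻¹ * h := by rw [← div_eq_inv_mul, le_div_iff₀' hδ]; exact hh_ge
    rw [div_le_iff₀ hh0, add_mul]
    linarith
  have hsecond : 2 ^ k * (ε / (2 * C) * ((n : ℝ) + k * h) ^ k) / (h : ℝ) ^ k ≤ ε / 2 := by
    calc 2 ^ k * (ε / (2 * C) * ((n : ℝ) + k * h) ^ k) / (h : ℝ) ^ k
        = ε / (2 * C) * (2 ^ k * (((n : ℝ) + k * h) / h) ^ k) := by rw [div_pow]; ring
      _ ≤ ε / (2 * C) * (2 ^ k * (δ⁻¹ + k) ^ k) := by gcongr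
      _ = ε / (2 * C) * C := rfl
      _ = ε / 2 := by field_simp
  linarith [abs_sum_Icc_sub_le_of_window a k L hK hn1 hh hB]

end Hardy

theorem hardy_cesaro_implies_convergent_general (a : ℕ → ℝ) (K : ℝ)
    (hK : ∀ n : ℕ, 1 ≤ n → |(n : ℝ) * a n| ≤ K)
    (k : ℕ) (L : ℝ)
    (hconv : Tendsto
      (fun n : ℕ => cesSum (fun m => ∑ i ∈ Finset.Icc 1 m, a i) k n / (n : ℝ) ^ k)
      atTop (𝓝 L)) :
    ∃ M : ℝ, Tendsto (fun n : ℕ => ∑ i ∈ Finset.Icc 1 n, a i) atTop (𝓝 M) := by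
  have hF := isLittleO_sub_mul_pow_of_tendsto_div_pow hconv
  have hK0 : 0 ≤ K := (abs_nonneg _).trans (hK 1 le_rfl)
  refine ⟨k.factorial * L, Metric.tendsto_nhds.2 fun ε hε => ?_⟩
  have hδ : 0 < ε / (2 * (K * k + 1)) := by positivity
  filter_upwards [eventually_abs_sum_Icc_sub_le a k L hK hF hδ (half_pos hε)] with n hn
  have hKk : K * k * (ε / (2 * (K * k + 1))) < ε / 2 := by
    rw [mul_div_assoc', div_lt_div_iff₀ (by positivity) two_pos]
    nlinarith
  rw [Real.dist_eq]
  linarith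

/-- **Hardy's theorem** (Theorem 1).  If `|n * a n| ≤ K` for all `n ≥ 1` and for some
`k ≥ 1` the `k`-th order Cesàro means `S^{(k)}_n / n^k` of the partial sums
`S_n = ∑_{i=1}^n a i` converge, then the series `∑ a n` converges, i.e. the partial
sums themselves converge. -/
theorem hardy_cesaro_implies_convergent (a : ℕ → ℝ) (K : ℝ)
    (hK : ∀ n : ℕ, 1 ≤ n → |(n : ℝ) * a n| ≤ K)
    (k : ℕ) (hk : 1 ≤ k) (L : ℝ)
    (hconv : Tendsto
      (fun n : ℕ => cesSum (fun m => ∑ i ∈ Finset.Icc 1 m, a i) k n / (n : ℝ) ^ k)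
      atTop (𝓝 L)) :
    ∃ M : ℝ, Tendsto (fun n : ℕ => ∑ i ∈ Finset.Icc 1 n, a i) atTop (𝓝 M) :=
  hardy_cesaro_implies_convergent_general a K hK k L hconv
end

section
/- Let a : ℕ → ℝ be a bounded sequence and B_n = (1/n) ∑_{i=0}^{n-1} a_i its Birkhoff averages. If the sequence (B_n) does not converge, then for every k ≥ 1 the k-th order Cesàro means of (B_n), namely S^{(k)}_n / n^k where S^{(0)}_n = B_n and S^{(k)}_n = ∑_{i=1}^n S^{(k-1)}_i, also do not converge. -/
open Filter Topology

/-- Birkhoff averages: `birk a n = (1/n) * ∑_{i=0}^{n-1} a i` (junk value `0` at `n = 0`). -/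
noncomputable def birk (a : ℕ → ℝ) (n : ℕ) : ℝ := (∑ i ∈ Finset.range n, a i) / n

/-! The Birkhoff averages `B` are bounded and oscillate slowly, since
`B (n+1) - B n = (a n - B n) / (n+1)`; hence the increments of `S^{(k)}` are `O(n^(k-1))`.
For such a sequence `T`, if `(∑_{i ≤ n} T i) / n^(k+1) → M` then `T n / n^k → (k+1) M`: over a
window `(n, n + εn]` the sum of `T` is `≈ εn · T n` up to `O(ε² n^(k+1))`, while by the hypothesis
it is `≈ M ((1+ε)^(k+1) - 1) n^(k+1)`; let `ε → 0`. Descending from `S^{(k)}` to `S^{(0)} = B`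
shows that `B` converges. -/

open Finset

lemma tendsto_of_forall_eventually_dist_lt {α X : Type*} [PseudoMetricSpace X] {l : Filter α}
    {x : α → X} {L : X} {g : ℝ → X} {e : ℝ → ℝ}
    (hg : Tendsto g (𝓝[>] 0) (𝓝 L)) (he : Tendsto e (𝓝[>] 0) (𝓝 0))
    (h : ∀ ε > 0, ∀ᶠ n in l, dist (x n) (g ε) < e ε) : Tendsto x l (𝓝 L) := by
  refine Metric.tendsto_nhds.mpr fun δ hδ => ?_
  obtain ⟨ε, hgε, heε, hε⟩ := ((Metric.tendsto_nhds.mp hg (δ / 2) (half_pos hδ)).and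
    ((he.eventually_lt_const (half_pos hδ)).and eventually_mem_nhdsWithin)).exists
  filter_upwards [h ε hε] with n hn
  calc dist (x n) L ≤ dist (x n) (g ε) + dist (g ε) L := dist_triangle _ _ _
    _ < δ := by linarith

lemma tendsto_one_add_pow_sub_one_div (k : ℕ) :
    Tendsto (fun ε : ℝ => ((1 + ε) ^ (k + 1) - 1) / ε) (𝓝[>] 0) (𝓝 (k + 1)) := by
  have h : HasDerivAt (fun ε : ℝ => (1 + ε) ^ (k + 1)) (k + 1) 0 := by
    simpa using ((hasDerivAt_id (0 : ℝ)).const_add 1).fun_pow (k + 1)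
  simpa [div_eq_inv_mul] using h.tendsto_slope_zero_right

lemma tendsto_natCeil_mul_div {ε : ℝ} (hε : 0 ≤ ε) :
    Tendsto (fun n : ℕ => (⌈ε * n⌉₊ : ℝ) / n) atTop (𝓝 ε) :=
  (tendsto_nat_ceil_mul_div_atTop hε).comp tendsto_natCast_atTop_atTop

lemma tendsto_add_natCeil_mul_div {ε : ℝ} (hε : 0 ≤ ε) :
    Tendsto (fun n : ℕ => ((n : ℝ) + ⌈ε * n⌉₊) / n) atTop (𝓝 (1 + ε)) := by
  refine (tendsto_const_nhds.add (tendsto_natCeil_mul_div hε)).congr' ?_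
  filter_upwards [eventually_gt_atTop 0] with n hn
  field_simp

lemma abs_sum_Ioc_sub_le {T : ℕ → ℝ} {D : ℝ} {n h : ℕ}
    (hT : ∀ j, n ≤ j → j < n + h → |T (j + 1) - T j| ≤ D) :
    |∑ i ∈ Ioc n (n + h), T i - h * T n| ≤ h * (h * D) := by
  rcases Nat.eq_zero_or_pos h with rfl | hh
  · simp
  have hD : 0 ≤ D := (abs_nonneg _).trans (hT n le_rfl (by omega))
  have hpt : ∀ i ∈ Ioc n (n + h), |T i - T n| ≤ h * D := by
    intro i hi
    rw [mem_Ioc] at hi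
    calc |T i - T n| = dist (T n) (T i) := by rw [Real.dist_eq, abs_sub_comm]
      _ ≤ ∑ _j ∈ Ico n i, D := dist_le_Ico_sum_of_dist_le hi.1.le fun hnj hji => by
          rw [Real.dist_eq, abs_sub_comm]
          exact hT _ hnj (by omega)
      _ = (i - n : ℕ) * D := by simp
      _ ≤ h * D := mul_le_mul_of_nonneg_right (by exact_mod_cast (by omega : i - n ≤ h)) hD
  calc |∑ i ∈ Ioc n (n + h), T i - h * T n| = |∑ i ∈ Ioc n (n + h), (T i - T n)| := by
        simp [sum_sub_distrib]
    _ ≤ ∑ i ∈ Ioc n (n + h), |T i - T n| := abs_sum_le_sum_abs _ _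
    _ ≤ ∑ _i ∈ Ioc n (n + h), h * D := sum_le_sum hpt
    _ = h * (h * D) := by simp

noncomputable def windowMean (T : ℕ → ℝ) (k h n : ℕ) : ℝ :=
  (∑ i ∈ Ioc n (n + h), T i) / (h * (n : ℝ) ^ k)

lemma abs_div_pow_sub_windowMean_le {T : ℕ → ℝ} {C : ℝ} {k : ℕ}
    (hT : ∀ j : ℕ, |T (j + 1) - T j| ≤ C * (j + 1) ^ k / (j + 1)) {n h : ℕ} (hn : 0 < n)
    (hh : 0 < h) :
    |T n / (n : ℝ) ^ k - windowMean T k h n| ≤ C * ((h : ℝ) / n) * (((n : ℝ) + h) / n) ^ k := by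
  have hC : 0 ≤ C := by simpa using (abs_nonneg _).trans (hT 0)
  have hwin := abs_sum_Ioc_sub_le (T := T) (D := C * ((n : ℝ) + h) ^ k / n) (n := n) (h := h)
    fun j hnj hjh => (hT j).trans <| div_le_div₀ (by positivity)
      (mul_le_mul_of_nonneg_left (pow_le_pow_left₀ (by positivity)
        (by exact_mod_cast (by omega : j + 1 ≤ n + h)) k) hC)
      (by positivity) (by exact_mod_cast (by omega : n ≤ j + 1))
  have hpos : (0 : ℝ) < h * (n : ℝ) ^ k := by positivity
  have hdiff : T n / (n : ℝ) ^ k - windowMean T k h n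
      = -(∑ i ∈ Ioc n (n + h), T i - h * T n) / (h * (n : ℝ) ^ k) := by
    rw [windowMean]
    field_simp
    ring
  rw [hdiff, abs_div, abs_neg, abs_of_pos hpos, div_le_iff₀ hpos]
  calc _ ≤ _ := hwin
    _ = _ := by
      rw [div_pow]
      field_simp

lemma tendsto_windowMean {T : ℕ → ℝ} {k : ℕ} {M : ℝ}
    (hU : Tendsto (fun n : ℕ => (∑ i ∈ Icc 1 n, T i) / (n : ℝ) ^ (k + 1)) atTop (𝓝 M))
    {ε : ℝ} (hε : 0 < ε) :
    Tendsto (fun n : ℕ => windowMean T k ⌈ε * n⌉₊ n) atTop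
      (𝓝 (M * (((1 + ε) ^ (k + 1) - 1) / ε))) := by
  have hinv : Tendsto (fun n : ℕ => (n : ℝ) / ⌈ε * n⌉₊) atTop (𝓝 ε⁻¹) := by
    simpa using (tendsto_natCeil_mul_div hε.le).inv₀ hε.ne'
  have hshift := hU.comp (tendsto_atTop_mono (fun n => Nat.le_add_right n ⌈ε * n⌉₊) tendsto_id)
  have hlim := ((hshift.mul ((tendsto_add_natCeil_mul_div hε.le).pow (k + 1))).mul hinv).sub
    (hU.mul hinv)
  rw [show M * (1 + ε) ^ (k + 1) * ε⁻¹ - M * ε⁻¹ = M * (((1 + ε) ^ (k + 1) - 1) / ε) by ring]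
    at hlim
  refine hlim.congr' ?_
  filter_upwards [eventually_gt_atTop 0] with n hn
  have hh : 0 < ⌈ε * n⌉₊ := Nat.ceil_pos.2 (by positivity)
  simp only [Function.comp_apply, windowMean]
  generalize ⌈ε * n⌉₊ = h at hh ⊢
  have hIcc : ∀ m, Icc 1 m = Ioc 0 m := fun m => Icc_add_one_left_eq_Ioc 0 m
  have hsplit : ∑ i ∈ Ioc n (n + h), T i = ∑ i ∈ Icc 1 (n + h), T i - ∑ i ∈ Icc 1 n, T i := by
    rw [hIcc, hIcc, ← sum_Ioc_consecutive T (Nat.zero_le n) (Nat.le_add_right n h)]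
    ring
  rw [hsplit, div_pow]
  push_cast
  field_simp
  ring

/-- `hT` is written with `(j+1)^k / (j+1)` instead of `(j+1)^(k-1)` (truncated subtraction), so
that for `k = 0` it reads `|T (j+1) - T j| ≤ C / (j+1)`. -/
theorem tendsto_div_pow_of_tendsto_sum_div_pow {T : ℕ → ℝ} {C : ℝ} {k : ℕ} {M : ℝ}
    (hT : ∀ j : ℕ, |T (j + 1) - T j| ≤ C * (j + 1) ^ k / (j + 1))
    (hU : Tendsto (fun n : ℕ => (∑ i ∈ Icc 1 n, T i) / (n : ℝ) ^ (k + 1)) atTop (𝓝 M)) :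
    Tendsto (fun n : ℕ => T n / (n : ℝ) ^ k) atTop (𝓝 ((k + 1) * M)) := by
  refine tendsto_of_forall_eventually_dist_lt
    (g := fun ε => M * (((1 + ε) ^ (k + 1) - 1) / ε)) (e := fun ε => C * ε * (1 + ε) ^ k + ε)
    ?_ ?_ fun ε hε => ?_
  · simpa [mul_comm] using (tendsto_one_add_pow_sub_one_div k).const_mul M
  · have he : Continuous fun ε : ℝ => C * ε * (1 + ε) ^ k + ε := by fun_prop
    simpa using he.continuousWithinAt.tendsto (s := Set.Ioi 0) (x := 0)
  have hE : Tendsto (fun n : ℕ => C * ((⌈ε * n⌉₊ : ℝ) / n) * (((n : ℝ) + ⌈ε * n⌉₊) / n) ^ k)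
      atTop (𝓝 (C * ε * (1 + ε) ^ k)) :=
    ((tendsto_natCeil_mul_div hε.le).const_mul C).mul
      ((tendsto_add_natCeil_mul_div hε.le).pow k)
  have hlim := hE.add ((tendsto_windowMean hU hε).dist
    (tendsto_const_nhds (x := M * (((1 + ε) ^ (k + 1) - 1) / ε))))
  rw [dist_self, add_zero] at hlim
  filter_upwards [hlim.eventually_lt_const (lt_add_of_pos_right _ hε),
    eventually_gt_atTop 0] with n hlt hn
  have hh : 0 < ⌈ε * n⌉₊ := Nat.ceil_pos.2 (by positivity)
  have herr := abs_div_pow_sub_windowMean_le hT hn hh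
  rw [← Real.dist_eq] at herr
  exact (dist_triangle _ _ _).trans_lt ((add_le_add herr le_rfl).trans_lt hlt)

lemma abs_cesSum_le {b : ℕ → ℝ} {C : ℝ} (hb : ∀ n, |b n| ≤ C) (k n : ℕ) :
    |cesSum b k n| ≤ C * (n : ℝ) ^ k := by
  have hC : 0 ≤ C := (abs_nonneg _).trans (hb 0)
  induction k generalizing n with
  | zero => simpa [cesSum] using hb n
  | succ k ih =>
    calc |cesSum b (k + 1) n| ≤ ∑ i ∈ Icc 1 n, |cesSum b k i| := abs_sum_le_sum_abs _ _
      _ ≤ ∑ _i ∈ Icc 1 n, C * (n : ℝ) ^ k := sum_le_sum fun i hi => (ih i).trans <|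
          mul_le_mul_of_nonneg_left (pow_le_pow_left₀ (by positivity)
            (by exact_mod_cast (mem_Icc.1 hi).2) k) hC
      _ = C * (n : ℝ) ^ (k + 1) := by
          simp only [sum_const, Nat.card_Icc, add_tsub_cancel_right, nsmul_eq_mul]
          ring

lemma cesSum_succ_succ_sub (b : ℕ → ℝ) (k n : ℕ) :
    cesSum b (k + 1) (n + 1) - cesSum b (k + 1) n = cesSum b k (n + 1) := by
  simp only [cesSum, sum_Icc_succ_top (Nat.le_add_left 1 n)]
  ring

lemma abs_cesSum_succ_sub_le {b : ℕ → ℝ} {C : ℝ} (hb : ∀ n, |b n| ≤ C)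
    (hb' : ∀ n : ℕ, |b (n + 1) - b n| ≤ C / (n + 1)) (k n : ℕ) :
    |cesSum b k (n + 1) - cesSum b k n| ≤ C * (n + 1) ^ k / (n + 1) := by
  cases k with
  | zero => simpa [cesSum] using hb' n
  | succ k =>
    rw [cesSum_succ_succ_sub, pow_succ, mul_div_assoc, mul_div_cancel_right₀ _ (by positivity)]
    exact_mod_cast abs_cesSum_le hb k (n + 1)

lemma exists_tendsto_of_tendsto_cesSum_div_pow {b : ℕ → ℝ} {C : ℝ} (hb : ∀ n, |b n| ≤ C)
    (hb' : ∀ n : ℕ, |b (n + 1) - b n| ≤ C / (n + 1)) (k : ℕ) {M : ℝ}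
    (hM : Tendsto (fun n : ℕ => cesSum b k n / (n : ℝ) ^ k) atTop (𝓝 M)) :
    ∃ L, Tendsto b atTop (𝓝 L) := by
  induction k generalizing M with
  | zero => exact ⟨M, by simpa [cesSum] using hM⟩
  | succ k ih =>
    exact ih (tendsto_div_pow_of_tendsto_sum_div_pow (abs_cesSum_succ_sub_le hb hb' k) hM)

lemma birk_succ_sub (a : ℕ → ℝ) (n : ℕ) :
    birk a (n + 1) - birk a n = (a n - birk a n) / (n + 1) := by
  rcases Nat.eq_zero_or_pos n with rfl | hn
  · simp [birk]
  simp only [birk, sum_range_succ]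
  push_cast
  field_simp
  ring

lemma abs_birk_le {a : ℕ → ℝ} {C : ℝ} (ha : ∀ n, |a n| ≤ C) (n : ℕ) : |birk a n| ≤ C := by
  rcases Nat.eq_zero_or_pos n with rfl | hn
  · simpa [birk] using (abs_nonneg _).trans (ha 0)
  have hn' : (0 : ℝ) < n := by exact_mod_cast hn
  rw [birk, abs_div, Nat.abs_cast, div_le_iff₀ hn']
  calc |∑ i ∈ range n, a i| ≤ ∑ _i ∈ range n, C :=
        (abs_sum_le_sum_abs _ _).trans (sum_le_sum fun i _ => ha i)
    _ = C * n := by simp [mul_comm]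

lemma abs_birk_succ_sub_le {a : ℕ → ℝ} {C : ℝ} (ha : ∀ n, |a n| ≤ C) (n : ℕ) :
    |birk a (n + 1) - birk a n| ≤ 2 * C / (n + 1) := by
  rw [birk_succ_sub, abs_div, abs_of_pos (n.cast_add_one_pos (α := ℝ))]
  refine div_le_div_of_nonneg_right ?_ n.cast_add_one_pos.le
  linarith [abs_sub (a n) (birk a n), ha n, abs_birk_le ha n]

theorem cesaro_means_of_divergent_birkhoff_diverge_general (a : ℕ → ℝ)
    (hbdd : ∃ C : ℝ, ∀ n, |a n| ≤ C)
    (hdiv : ¬ ∃ L : ℝ, Tendsto (birk a) atTop (𝓝 L))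
    (k : ℕ) :
    ¬ ∃ L : ℝ, Tendsto (fun n : ℕ => cesSum (birk a) k n / (n : ℝ) ^ k) atTop (𝓝 L) := by
  rintro ⟨L, hL⟩
  obtain ⟨C, hC⟩ := hbdd
  have hC0 : 0 ≤ C := (abs_nonneg _).trans (hC 0)
  have hbirk : ∀ n, |birk a n| ≤ 2 * C := fun n => by linarith [abs_birk_le hC n]
  exact hdiv (exists_tendsto_of_tendsto_cesSum_div_pow hbirk (abs_birk_succ_sub_le hC) k hL)

/-- **Corollary 1.** If `a` is bounded and the Birkhoff averages
`B_n = (1/n) ∑_{i=0}^{n-1} a i` do not converge, then for every `k ≥ 1` the `k`-th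
order Cesàro means `S^{(k)}_n / n^k` of `(B_n)` (with `S^{(0)}_n = B_n`) do not
converge either. -/
theorem cesaro_means_of_divergent_birkhoff_diverge (a : ℕ → ℝ)
    (hbdd : ∃ C : ℝ, ∀ n, |a n| ≤ C)
    (hdiv : ¬ ∃ L : ℝ, Tendsto (birk a) atTop (𝓝 L))
    (k : ℕ) (hk : 1 ≤ k) :
    ¬ ∃ L : ℝ, Tendsto (fun n : ℕ => cesSum (birk a) k n / (n : ℝ) ^ k) atTop (𝓝 L) :=
  cesaro_means_of_divergent_birkhoff_diverge_general a hbdd hdiv k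
end
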